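/- arXiv:1309.0158 — 2 statements merged into one kernel-verified Lean document; each statement's English description precedes it below -/
import Mathlib

section
/- Let Q̃ be a stochastic matrix on a finite set 𝒱, μ a probability vector on 𝒱, β ∈ (0,1), and P̃ := (1−β)·Q̃ + β·𝟙μ, where 𝟙μ is the matrix with entry (𝟙μ)_{uv} = μ_v. Let π̃ be any invariant probability vector of P̃ and let W ⊆ 𝒱 with W ≠ 𝒱. Then the exit probability from W satisfies γ̃_W ≥ β·(1 − μ(W)), where μ(W) := Σ_{w∈W} μ_w. -/
open scoped Classical BigOperators
open Finset

variable {V : Type*}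

/-- A (row-)stochastic matrix: nonnegative entries, rows summing to one. -/
def IsStochastic [Fintype V] (P : Matrix V V ℝ) : Prop :=
  (∀ u v, 0 ≤ P u v) ∧ ∀ u, ∑ v, P u v = 1

/-- Irreducibility: the digraph with an edge `(u,v)` whenever `P u v > 0`
is strongly connected. -/
def IrreducibleMatrix [Fintype V] (P : Matrix V V ℝ) : Prop :=
  ∀ u v : V, Relation.ReflTransGen (fun a b => 0 < P a b) u v

/-- `p` is an invariant probability (row) vector of `P`. -/
def InvariantProb [Fintype V] (P : Matrix V V ℝ) (p : V → ℝ) : Prop :=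
  (∀ v, 0 ≤ p v) ∧ (∑ v, p v = 1) ∧ ∀ v, ∑ u, p u * P u v = p v

/-- Total variation distance. -/
noncomputable def tvDist [Fintype V] (mu p : V → ℝ) : ℝ :=
  (1 / 2) * ∑ v, |mu v - p v|

/-- The smallest positive solution of `x * log (e^2 / x) = 1`. -/
noncomputable def xstar : ℝ :=
  sInf {x : ℝ | 0 < x ∧ x * Real.log (Real.exp 2 / x) = 1}

/-- The function `Ψ`: `Ψ(x) = x log(e²/x)` for `x ≤ x*`, and `1` for `x > x*`
(note `Ψ(0) = 0` since `Real.log (e²/0) = Real.log 0 = 0`). -/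
noncomputable def Psi (x : ℝ) : ℝ :=
  if x ≤ xstar then x * Real.log (Real.exp 2 / x) else 1

open Fin.NatCast in
/-- `phi P W w k` is the probability that a chain with transition matrix `P`
started at `w` exits `W` exactly at time `k`: the sum over `(k+1)`-tuples
`ξ` with `ξ 0 = w`, `ξ l ∈ W` for `0 < l < k`, `ξ k ∉ W`, of `∏ P (ξ (l-1)) (ξ l)`. -/
noncomputable def phi [Fintype V] (P : Matrix V V ℝ) (W : Finset V) (w : V) (k : ℕ) : ℝ :=
  ∑ ξ ∈ Finset.univ.filter (fun ξ : Fin (k + 1) → V =>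
      ξ 0 = w ∧ (∀ l : ℕ, 0 < l → l < k → ξ l ∈ W) ∧ ξ k ∉ W),
    ∏ l ∈ Finset.range k, P (ξ l) (ξ (l + 1))

/-- `(1/t) * min_{w ∈ W, p w > 0} ∑_{k=1}^t phi w k` (the minimum over an empty
index set is taken to be `1`). -/
noncomputable def exitProbAux [Fintype V] (P : Matrix V V ℝ) (p : V → ℝ) (W : Finset V)
    (t : ℕ) : ℝ :=
  if h : (W.filter fun w => 0 < p w).Nonempty then
    (W.filter fun w => 0 < p w).inf' h
      (fun w => (1 / (t : ℝ)) * ∑ k ∈ Finset.Icc 1 t, phi P W w k)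
  else 1

/-- The exit probability from `W`:
`sup_{t ≥ 1} min_{w ∈ W, p w > 0} (1/t) ∑_{k=1}^t phi w k`. -/
noncomputable def exitProb [Fintype V] (P : Matrix V V ℝ) (p : V → ℝ) (W : Finset V) : ℝ :=
  sSup {x : ℝ | ∃ t : ℕ, 1 ≤ t ∧ x = exitProbAux P p W t}

/-- The entrance time `τ*_W := min_{u ∉ W} τ^u`. -/
noncomputable def entranceTime (tau : V → ℝ) (W : Finset V) : ℝ :=
  sInf {x : ℝ | ∃ u, u ∉ W ∧ x = tau u}

/-! Already the term `t = 1` of the supremum gives the bound: from every `w`, the teleportation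
part `β 𝟙μ` of `P̃` alone leaves `W` in one step with probability at least `β μ(𝒱 ∖ W)`. What
remains is that the supremum is over a set bounded by `1`, because `φ_w(k)` is at most the total
weight `1` of the length-`k` paths starting at `w`. -/

open Fin.NatCast

noncomputable def pathWeight [Fintype V] (P : Matrix V V ℝ) {k : ℕ} (ξ : Fin (k + 1) → V) : ℝ :=
  ∏ l ∈ Finset.range k, P (ξ l) (ξ (l + 1))

lemma Fin.cons_natCast_succ {k : ℕ} (x : V) (ζ : Fin (k + 1) → V) {n : ℕ} (hn : n < k + 1) :
    (Fin.cons x ζ : Fin (k + 2) → V) ((n + 1 : ℕ) : Fin (k + 2)) = ζ n := by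
  have : ((n + 1 : ℕ) : Fin (k + 2)) = (n : Fin (k + 1)).succ := by
    ext
    rw [Fin.val_natCast, Fin.val_succ, Fin.val_natCast, Nat.mod_eq_of_lt hn,
      Nat.mod_eq_of_lt (Nat.succ_lt_succ hn)]
  rw [this, Fin.cons_succ]

lemma pathWeight_cons [Fintype V] (P : Matrix V V ℝ) {k : ℕ} (x : V) (ζ : Fin (k + 1) → V) :
    pathWeight P (Fin.cons x ζ : Fin (k + 2) → V) = pathWeight P ζ * P x (ζ 0) := by
  unfold pathWeight
  rw [Finset.prod_range_succ']
  congr 1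
  refine Finset.prod_congr rfl fun l hl => ?_
  have hl := Finset.mem_range.1 hl
  -- `ξ (l + 1)` adds in `Fin`; it agrees with the cast of `l + 1 : ℕ` since nothing wraps around
  simp only [← Nat.cast_add_one]
  rw [Fin.cons_natCast_succ _ _ (by omega), Fin.cons_natCast_succ _ _ (by omega)]

lemma sum_pathWeight_eq_one [Fintype V] {P : Matrix V V ℝ} (hP : IsStochastic P) (k : ℕ) (w : V) :
    ∑ ξ ∈ univ.filter (fun ξ : Fin (k + 1) → V => ξ 0 = w), pathWeight P ξ = 1 := by
  induction k generalizing w with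
  | zero =>
    rw [Finset.sum_eq_single_of_mem (fun _ => w) (by simp)]
    · simp [pathWeight]
    · intro ξ hξ hne
      exact absurd (funext fun i => by rw [Fin.fin_one_eq_zero i]; exact (mem_filter.1 hξ).2) hne
  | succ k ih =>
    calc ∑ ξ ∈ univ.filter (fun ξ : Fin (k + 2) → V => ξ 0 = w), pathWeight P ξ
        = ∑ ζ : Fin (k + 1) → V, pathWeight P ζ * P w (ζ 0) := by
          rw [Finset.sum_filter, ← (Fin.consEquiv fun _ => V).sum_comp, Fintype.sum_prod_type]
          simp only [Fin.consEquiv_apply, Fin.cons_zero, Finset.sum_ite_irrel,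
            Finset.sum_const_zero, Finset.sum_ite_eq', Finset.mem_univ, if_true]
          exact Finset.sum_congr rfl fun ζ _ => pathWeight_cons P w ζ
      _ = ∑ v, ∑ ζ ∈ univ.filter (fun ζ : Fin (k + 1) → V => ζ 0 = v), pathWeight P ζ * P w v := by
          rw [← Finset.sum_fiberwise univ (fun ζ : Fin (k + 1) → V => ζ 0)]
          refine Finset.sum_congr rfl fun v _ => Finset.sum_congr rfl fun ζ hζ => ?_
          rw [(mem_filter.1 hζ).2]
      _ = 1 := by simp only [← Finset.sum_mul, ih, one_mul, hP.2]

lemma phi_le_one [Fintype V] {P : Matrix V V ℝ} (hP : IsStochastic P) (W : Finset V) (w : V)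
    (k : ℕ) : phi P W w k ≤ 1 := by
  rw [← sum_pathWeight_eq_one hP k w]
  refine Finset.sum_le_sum_of_subset_of_nonneg (Finset.monotone_filter_right _ fun _ _ h => h.1)
    fun ξ _ _ => Finset.prod_nonneg fun _ _ => hP.1 _ _

lemma phi_one [Fintype V] (P : Matrix V V ℝ) (W : Finset V) (w : V) :
    phi P W w 1 = ∑ v ∈ Wᶜ, P w v := by
  refine Finset.sum_nbij' (fun ξ => ξ 1) (fun v => ![w, v]) ?_ ?_ ?_ ?_ ?_ <;>
    simp only [Finset.mem_filter, Finset.mem_univ, Finset.mem_compl, true_and]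
  · exact fun ξ hξ => hξ.2.2
  · exact fun v hv => ⟨rfl, fun _ _ h2 => absurd h2 (by omega), hv⟩
  · intro ξ hξ
    funext i
    fin_cases i
    · simp [hξ.1]
    · simp
  · simp
  · intro ξ hξ
    simp [hξ.1]

lemma exitProbAux_le_one [Fintype V] {P : Matrix V V ℝ} (hP : IsStochastic P) (p : V → ℝ)
    (W : Finset V) {t : ℕ} (ht : 1 ≤ t) : exitProbAux P p W t ≤ 1 := by
  unfold exitProbAux
  split_ifs with h
  · obtain ⟨w, hw⟩ := h
    refine (Finset.inf'_le _ hw).trans ?_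
    have ht0 : (0 : ℝ) < t := by exact_mod_cast ht
    calc 1 / (t : ℝ) * ∑ k ∈ Finset.Icc 1 t, phi P W w k
        ≤ 1 / (t : ℝ) * ∑ k ∈ Finset.Icc 1 t, 1 := by
          gcongr with k
          exact phi_le_one hP W w k
      _ = 1 := by simp [ht0.ne']
  · exact le_rfl

lemma exitProbAux_le_exitProb [Fintype V] {P : Matrix V V ℝ} (hP : IsStochastic P) (p : V → ℝ)
    (W : Finset V) {t : ℕ} (ht : 1 ≤ t) : exitProbAux P p W t ≤ exitProb P p W := by
  refine le_csSup ⟨1, ?_⟩ ⟨t, ht, rfl⟩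
  rintro _ ⟨s, hs, rfl⟩
  exact exitProbAux_le_one hP p W hs

lemma le_exitProb_of_forall_le_sum_compl [Fintype V] {P : Matrix V V ℝ} (hP : IsStochastic P)
    (p : V → ℝ) (W : Finset V) {c : ℝ} (hc : c ≤ 1) (h : ∀ w ∈ W, c ≤ ∑ v ∈ Wᶜ, P w v) :
    c ≤ exitProb P p W := by
  refine le_trans ?_ (exitProbAux_le_exitProb hP p W le_rfl)
  unfold exitProbAux
  split_ifs
  · refine Finset.le_inf' _ _ fun w hw => ?_
    simpa [phi_one] using h w (Finset.mem_filter.1 hw).1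
  · exact hc

section Teleport

variable [Fintype V] {Q P : Matrix V V ℝ} {mu : V → ℝ} {β : ℝ}

lemma isStochastic_of_teleport (hQ : IsStochastic Q) (hmu : (∀ v, 0 ≤ mu v) ∧ ∑ v, mu v = 1)
    (hβ0 : 0 ≤ β) (hβ1 : β ≤ 1) (hP : ∀ u v, P u v = (1 - β) * Q u v + β * mu v) :
    IsStochastic P := by
  refine ⟨fun u v => ?_, fun u => ?_⟩
  · rw [hP]
    have := hQ.1 u v
    have := hmu.1 v
    have : 0 ≤ 1 - β := sub_nonneg.2 hβ1
    positivity
  · simp only [hP, Finset.sum_add_distrib, ← Finset.mul_sum, hQ.2 u, hmu.2]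
    ring

lemma mul_mu_le_of_teleport (hQ : IsStochastic Q) (hβ1 : β ≤ 1)
    (hP : ∀ u v, P u v = (1 - β) * Q u v + β * mu v) (u v : V) : β * mu v ≤ P u v := by
  rw [hP]
  have := mul_nonneg (sub_nonneg.2 hβ1) (hQ.1 u v)
  linarith

end Teleport

theorem stmt8_general [Fintype V] (Qt Pt : Matrix V V ℝ) (mu pit : V → ℝ) (β : ℝ)
    (W : Finset V)
    (hQt : IsStochastic Qt) (hmu : (∀ v, 0 ≤ mu v) ∧ ∑ v, mu v = 1)
    (hβ : 0 < β ∧ β < 1)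
    (hPtdef : ∀ u v, Pt u v = (1 - β) * Qt u v + β * mu v) :
    β * (1 - ∑ w ∈ W, mu w) ≤ exitProb Pt pit W := by
  obtain ⟨hβ0, hβ1⟩ := hβ
  have hPt := isStochastic_of_teleport hQt hmu hβ0.le hβ1.le hPtdef
  have hmuWc : ∑ v ∈ Wᶜ, mu v = 1 - ∑ w ∈ W, mu w := by
    rw [← hmu.2, ← Finset.sum_compl_add_sum W mu, add_sub_cancel_right]
  refine le_exitProb_of_forall_le_sum_compl hPt pit W ?_ fun w _ => ?_
  · have hmuW : 0 ≤ ∑ w ∈ W, mu w := Finset.sum_nonneg fun v _ => hmu.1 v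
    exact (mul_le_of_le_one_right hβ0.le (by linarith)).trans hβ1.le
  · calc β * (1 - ∑ w ∈ W, mu w) = ∑ v ∈ Wᶜ, β * mu v := by rw [← Finset.mul_sum, hmuWc]
      _ ≤ ∑ v ∈ Wᶜ, Pt w v :=
        Finset.sum_le_sum fun v _ => mul_mu_le_of_teleport hQt hβ1.le hPtdef w v

/-- for `Pt = (1-β) Qt + β 𝟙μ`, the exit probability from any
`W ≠ 𝒱` satisfies `γ̃_W ≥ β (1 - μ(W))`. -/
theorem stmt8 [Fintype V] (Qt Pt : Matrix V V ℝ) (mu pit : V → ℝ) (β : ℝ)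
    (W : Finset V)
    (hQt : IsStochastic Qt) (hmu : (∀ v, 0 ≤ mu v) ∧ ∑ v, mu v = 1)
    (hβ : 0 < β ∧ β < 1)
    (hPtdef : ∀ u v, Pt u v = (1 - β) * Qt u v + β * mu v)
    (hpit : InvariantProb Pt pit) (hW : W ≠ Finset.univ) :
    β * (1 - ∑ w ∈ W, mu w) ≤ exitProb Pt pit W :=
  stmt8_general Qt Pt mu pit β W hQt hmu hβ hPtdef
end

section
/- Let Q and Q̃ be stochastic matrices on a finite set 𝒱, μ a probability vector on 𝒱, and β ∈ (0,1). Set P := (1−β)·Q + β·𝟙μ and P̃ := (1−β)·Q̃ + β·𝟙μ, where 𝟙μ is the matrix with entries (𝟙μ)_{uv} = μ_v. Suppose P is irreducible with invariant probability vector π, let π̃ be an invariant probability vector of P̃, and let W ⊆ 𝒱 be a set containing supp(Q̃ − Q) with W ≠ 𝒱 and μ(W) < 1. Then ‖π̃ − π‖ ≤ Ψ( (1+β)·π(W) / (β²·(1 − μ(W))) ), where π(W) := Σ_{w∈W} π_w and μ(W) := Σ_{w∈W} μ_w. -/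
open scoped Classical BigOperators
open Finset

variable {V : Type*}

/-!
The teleportation terms `β μ` cancel in `π̃ - π`, leaving
`π̃ - π = (1 - β) ((π̃ - π) Q̃ + π (Q̃ - Q))`. A stochastic matrix does not increase the `ℓ¹` norm,
and `π (Q̃ - Q)` only involves the rows indexed by `W`, each of `ℓ¹` norm at most `2`; hence
`β ‖π̃ - π‖₁ ≤ 2 (1 - β) π(W)`. The resulting bound `‖π̃ - π‖ ≤ (1 - β) π(W) / β` is at most `2x`,
where `x` is the argument of `Ψ`, and `Ψ(x) ≥ min(1, 2x)` because `log (e² / x) ≥ 2` for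
`0 < x ≤ x* ≤ 1`.
-/

theorem sum_abs_sub_le_two_of_prob [Fintype V] {p q : V → ℝ} (hp : ∀ v, 0 ≤ p v)
    (hq : ∀ v, 0 ≤ q v) (hp1 : ∑ v, p v = 1) (hq1 : ∑ v, q v = 1) :
    ∑ v, |p v - q v| ≤ 2 := by
  calc ∑ v, |p v - q v| ≤ ∑ v, (p v + q v) :=
        sum_le_sum fun v _ => abs_sub_le_iff.2 ⟨by linarith [hq v], by linarith [hp v]⟩
    _ = 2 := by rw [sum_add_distrib, hp1, hq1]; norm_num

theorem tvDist_le_one_of_prob [Fintype V] {p q : V → ℝ} (hp : ∀ v, 0 ≤ p v)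
    (hq : ∀ v, 0 ≤ q v) (hp1 : ∑ v, p v = 1) (hq1 : ∑ v, q v = 1) : tvDist p q ≤ 1 := by
  have := sum_abs_sub_le_two_of_prob hp hq hp1 hq1
  rw [tvDist]
  linarith

namespace IsStochastic

variable [Fintype V] {Q Qt : Matrix V V ℝ}

theorem sum_abs_sum_mul_le (hQ : IsStochastic Q) (x : V → ℝ) :
    ∑ v, |∑ u, x u * Q u v| ≤ ∑ u, |x u| := by
  calc ∑ v, |∑ u, x u * Q u v| ≤ ∑ v, ∑ u, |x u| * Q u v :=
        sum_le_sum fun v _ => (abs_sum_le_sum_abs _ _).trans_eq <|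
          sum_congr rfl fun u _ => by rw [abs_mul, abs_of_nonneg (hQ.1 u v)]
    _ = ∑ u, |x u| := by
        rw [sum_comm]
        simp only [← mul_sum, hQ.2, mul_one]

theorem sum_abs_sum_mul_sub_le (hQ : IsStochastic Q) (hQt : IsStochastic Qt) {p : V → ℝ}
    (hp : ∀ v, 0 ≤ p v) {W : Finset V} (hW : ∀ u, Q u ≠ Qt u → u ∈ W) :
    ∑ v, |∑ u, p u * (Qt u v - Q u v)| ≤ 2 * ∑ w ∈ W, p w := by
  have hrow (u : V) : ∑ v, |Qt u v - Q u v| ≤ 2 :=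
    sum_abs_sub_le_two_of_prob (hQt.1 u) (hQ.1 u) (hQt.2 u) (hQ.2 u)
  calc ∑ v, |∑ u, p u * (Qt u v - Q u v)| ≤ ∑ v, ∑ u, p u * |Qt u v - Q u v| :=
        sum_le_sum fun v _ => (abs_sum_le_sum_abs _ _).trans_eq <|
          sum_congr rfl fun u _ => by rw [abs_mul, abs_of_nonneg (hp u)]
    _ = ∑ u ∈ W, p u * ∑ v, |Qt u v - Q u v| := by
        rw [sum_comm, ← sum_subset (subset_univ W)]
        · simp only [mul_sum]
        · intro u _ hu
          rw [not_imp_comm.1 (hW u) hu]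
          simp
    _ ≤ ∑ u ∈ W, p u * 2 := sum_le_sum fun u _ => mul_le_mul_of_nonneg_left (hrow u) (hp u)
    _ = 2 * ∑ w ∈ W, p w := by rw [← sum_mul, mul_comm]

end IsStochastic

section Damped

variable [Fintype V] {Q Qt P Pt : Matrix V V ℝ} {mu p pi pit : V → ℝ} {β : ℝ}

theorem InvariantProb.eq_damped (hP : ∀ u v, P u v = (1 - β) * Q u v + β * mu v)
    (hp : InvariantProb P p) (v : V) :
    p v = (1 - β) * ∑ u, p u * Q u v + β * mu v := by
  simp only [← hp.2.2 v, hP, mul_add, sum_add_distrib, ← sum_mul, hp.2.1, one_mul, mul_sum]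
  simp only [mul_left_comm]

theorem InvariantProb.sum_abs_sub_le_of_damped (hQ : IsStochastic Q) (hQt : IsStochastic Qt)
    (hβ : β ≤ 1) (hP : ∀ u v, P u v = (1 - β) * Q u v + β * mu v)
    (hPt : ∀ u v, Pt u v = (1 - β) * Qt u v + β * mu v)
    (hpi : InvariantProb P pi) (hpit : InvariantProb Pt pit) {W : Finset V}
    (hW : ∀ u, Q u ≠ Qt u → u ∈ W) :
    β * ∑ v, |pit v - pi v| ≤ 2 * (1 - β) * ∑ w ∈ W, pi w := by
  have hdiff (v : V) : pit v - pi v =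
      (1 - β) * (∑ u, (pit u - pi u) * Qt u v + ∑ u, pi u * (Qt u v - Q u v)) := by
    rw [hpit.eq_damped hPt v, hpi.eq_damped hP v]
    simp only [sub_mul, mul_sub, sum_sub_distrib]
    ring
  have hcontr := hQt.sum_abs_sum_mul_le (fun u => pit u - pi u)
  have herr := hQ.sum_abs_sum_mul_sub_le hQt hpi.1 hW
  have hstep : ∑ v, |pit v - pi v| ≤ (1 - β) * (∑ v, |pit v - pi v| + 2 * ∑ w ∈ W, pi w) :=
    calc ∑ v, |pit v - pi v|
        ≤ ∑ v, (1 - β) * (|∑ u, (pit u - pi u) * Qt u v| + |∑ u, pi u * (Qt u v - Q u v)|) :=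
          sum_le_sum fun v _ => by
            rw [hdiff, abs_mul, abs_of_nonneg (sub_nonneg.2 hβ)]
            exact mul_le_mul_of_nonneg_left (abs_add_le _ _) (sub_nonneg.2 hβ)
      _ ≤ (1 - β) * (∑ v, |pit v - pi v| + 2 * ∑ w ∈ W, pi w) := by
          rw [← mul_sum, sum_add_distrib]
          exact mul_le_mul_of_nonneg_left (by linarith) (sub_nonneg.2 hβ)
  linarith

end Damped

theorem two_le_log_exp_two_div {x : ℝ} (hx0 : 0 < x) (hx1 : x ≤ 1) :
    2 ≤ Real.log (Real.exp 2 / x) := by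
  rw [Real.log_div (Real.exp_pos 2).ne' hx0.ne', Real.log_exp]
  linarith [Real.log_nonpos hx0.le hx1]

theorem xstar_le_one : xstar ≤ 1 := by
  set f : ℝ → ℝ := fun x => x * Real.log (Real.exp 2 / x)
  have ha : 0 < Real.exp (-2) := Real.exp_pos _
  have hexp : Real.exp 2 * Real.exp (-2) = 1 := by rw [← Real.exp_add]; norm_num
  have hexp2 : 4 ≤ Real.exp 2 := by
    have h2 : 2 ≤ Real.exp 1 := by linarith [Real.add_one_le_exp 1]
    calc (4 : ℝ) = 2 ^ 2 := by norm_num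
      _ ≤ Real.exp 1 ^ 2 := by gcongr
      _ = Real.exp 2 := by rw [← Real.exp_nat_mul]; norm_num
  have hcont : ContinuousOn f (Set.Icc (Real.exp (-2)) 1) := by
    have hpos (x : ℝ) (hx : x ∈ Set.Icc (Real.exp (-2)) 1) : 0 < x := ha.trans_le hx.1
    exact continuousOn_id.mul <| (continuousOn_const.div continuousOn_id
      fun x hx => (hpos x hx).ne').log fun x hx => (div_pos (Real.exp_pos 2) (hpos x hx)).ne'
  -- `f (e⁻²) = 4 e⁻² ≤ 1 < 2 = f 1`
  have hfa : f (Real.exp (-2)) ≤ 1 := by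
    simp only [f, ← Real.exp_sub, Real.log_exp]
    nlinarith
  have hfb : 1 ≤ f 1 := by simp [f, Real.log_exp]
  obtain ⟨c, hc, hfc⟩ := intermediate_value_Icc (Real.exp_le_one_iff.2 (by norm_num)) hcont
    (Set.mem_Icc.2 ⟨hfa, hfb⟩)
  refine le_trans (csInf_le ⟨0, fun y hy => hy.1.le⟩ ?_) hc.2
  exact ⟨ha.trans_le hc.1, hfc⟩

theorem min_one_two_mul_le_Psi {x : ℝ} (hx : 0 ≤ x) : min 1 (2 * x) ≤ Psi x := by
  rw [Psi]
  split_ifs with hxs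
  · rcases hx.eq_or_lt with rfl | hx0
    · simp
    · exact (min_le_right _ _).trans <| by
        nlinarith [two_le_log_exp_two_div hx0 (hxs.trans xstar_le_one)]
  · exact min_le_left _ _

theorem stmt10_general [Fintype V] (Q Qt P Pt : Matrix V V ℝ) (mu pi pit : V → ℝ) (β : ℝ)
    (W : Finset V)
    (hQ : IsStochastic Q) (hQt : IsStochastic Qt)
    (hmu : (∀ v, 0 ≤ mu v) ∧ ∑ v, mu v = 1)
    (hβ : 0 < β ∧ β < 1)
    (hPdef : ∀ u v, P u v = (1 - β) * Q u v + β * mu v)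
    (hPtdef : ∀ u v, Pt u v = (1 - β) * Qt u v + β * mu v)
    (hpi : InvariantProb P pi)
    (hpit : InvariantProb Pt pit)
    (hW : ∀ u : V, Q u ≠ Qt u → u ∈ W)
    (hmuW : ∑ w ∈ W, mu w < 1) :
    tvDist pit pi ≤
      Psi ((1 + β) * (∑ w ∈ W, pi w) / (β ^ 2 * (1 - ∑ w ∈ W, mu w))) := by
  obtain ⟨hβ0, hβ1⟩ := hβ
  have hL1 := hpi.sum_abs_sub_le_of_damped hQ hQt hβ1.le hPdef hPtdef hpit hW
  set piW := ∑ w ∈ W, pi w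
  set muW := ∑ w ∈ W, mu w
  have hpiW : 0 ≤ piW := sum_nonneg fun w _ => hpi.1 w
  have hmuW0 : 0 ≤ muW := sum_nonneg fun w _ => hmu.1 w
  have hmuW1 : 0 < 1 - muW := sub_pos.2 hmuW
  have htv : tvDist pit pi ≤ 2 * ((1 + β) * piW / (β ^ 2 * (1 - muW))) := by
    rw [tvDist, mul_div_assoc', le_div_iff₀ (by positivity)]
    have hfac : β * (1 - muW) * (1 - β) ≤ 2 * (1 + β) :=
      calc β * (1 - muW) * (1 - β) ≤ 1 * 1 * 1 := by gcongr <;> linarith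
        _ ≤ 2 * (1 + β) := by linarith
    calc (1 / 2 * ∑ v, |pit v - pi v|) * (β ^ 2 * (1 - muW))
        = (β * ∑ v, |pit v - pi v|) * (β * (1 - muW)) / 2 := by ring
      _ ≤ (2 * (1 - β) * piW) * (β * (1 - muW)) / 2 := by gcongr
      _ = β * (1 - muW) * (1 - β) * piW := by ring
      _ ≤ 2 * ((1 + β) * piW) := by rw [← mul_assoc]; gcongr
  exact (le_min (tvDist_le_one_of_prob hpit.1 hpi.1 hpit.2.1 hpi.2.1) htv).trans (min_one_two_mul_le_Psi (by positivity))

/-- robustness of PageRank. If `P = (1-β) Q + β 𝟙μ` is irreducible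
with invariant probability vector `pi`, `Pt = (1-β) Qt + β 𝟙μ` has invariant
probability vector `pit`, and `W ⊇ supp(Qt - Q)` with `W ≠ 𝒱` and `μ(W) < 1`, then
`‖pit - pi‖ ≤ Ψ((1+β) π(W) / (β² (1 - μ(W))))`. -/
theorem stmt10 [Fintype V] (Q Qt P Pt : Matrix V V ℝ) (mu pi pit : V → ℝ) (β : ℝ)
    (W : Finset V)
    (hQ : IsStochastic Q) (hQt : IsStochastic Qt)
    (hmu : (∀ v, 0 ≤ mu v) ∧ ∑ v, mu v = 1)
    (hβ : 0 < β ∧ β < 1)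
    (hPdef : ∀ u v, P u v = (1 - β) * Q u v + β * mu v)
    (hPtdef : ∀ u v, Pt u v = (1 - β) * Qt u v + β * mu v)
    (hirr : IrreducibleMatrix P) (hpi : InvariantProb P pi)
    (hpit : InvariantProb Pt pit)
    (hW : ∀ u : V, Q u ≠ Qt u → u ∈ W) (hWne : W ≠ Finset.univ)
    (hmuW : ∑ w ∈ W, mu w < 1) :
    tvDist pit pi ≤
      Psi ((1 + β) * (∑ w ∈ W, pi w) / (β ^ 2 * (1 - ∑ w ∈ W, mu w))) :=
  stmt10_general Q Qt P Pt mu pi pit β W hQ hQt hmu hβ hPdef hPtdef hpi hpit hW hmuW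
end
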